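/- arXiv:1609.02743 — 5 statements merged into one kernel-verified Lean document; each statement's English description precedes it below -/
import Mathlib

section
/- Let k ∈ ℕ with k > 1 and let j be an even index with 0 ≤ j ≤ 2^k − 4, so that both squares Q_{k,j} and Q_{k,j+1} are defined. Then for every i ∈ {1,2,3,4} and both choices of sign, the Lebesgue measure satisfies L²((Q_{k,j} ∪ Q_{k,j+1}) ∩ Ω^{p_v}_{±i}) ≥ (1/8)·(1/2^k)². -/
open MeasureTheory Set
open scoped ENNReal NNReal

noncomputable section

/-- The plane `ℝ²`. -/
abbrev E2 := EuclideanSpace ℝ (Fin 2)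

/-- The point `(x, y) ∈ ℝ²`. -/
def pt (x y : ℝ) : E2 := WithLp.toLp 2 ![x, y]

def A1 : Matrix (Fin 2) (Fin 2) ℝ := !![1, 0; 0, 1]
def A2 : Matrix (Fin 2) (Fin 2) ℝ := !![0, 1; 1, 0]
def A3 : Matrix (Fin 2) (Fin 2) ℝ := !![-1, 0; 0, 1]
def A4 : Matrix (Fin 2) (Fin 2) ℝ := !![0, -1; 1, 0]

/-- The set `E = {±A₁, ±A₂, ±A₃, ±A₄}`. -/
def Eset : Set (Matrix (Fin 2) (Fin 2) ℝ) := {A1, -A1, A2, -A2, A3, -A3, A4, -A4}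

/-- The continuous linear map on `ℝ²` associated to a `2 × 2` matrix. -/
def matCLM (A : Matrix (Fin 2) (Fin 2) ℝ) : E2 →L[ℝ] E2 :=
  LinearMap.toContinuousLinearMap (Matrix.toEuclideanLin A)

/-- `a(x,y) = min {1+x, 1−x, 1+y, 1−y}`. -/
def aFun (x y : ℝ) : ℝ := min (min (1 + x) (1 - x)) (min (1 + y) (1 - y))

/-- `b(x,y) = max {1−|x|, 1−|y|}`. -/
def bFun (x y : ℝ) : ℝ := max (1 - |x|) (1 - |y|)

/-- The function `c` of the construction. -/
def cFun (x y : ℝ) : ℝ :=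
  if |x| ≤ y then 1 - |x|
  else if |y| ≤ -x then 1 - y
  else if |x| ≤ -y then 1 - x
  else 1 - |y|

/-- The function `d` of the construction. -/
def dFun (x y : ℝ) : ℝ :=
  if |x| ≤ y then 1 - x
  else if |y| ≤ -x then 1 + y
  else if |x| ≤ -y then 1 - |x|
  else 1 - |y|

/-- The rescaling `f_k(x,y) = 2^{−k} f(2^k x, 2^k y)`. -/
def resc (f : ℝ → ℝ → ℝ) (k : ℕ) (x y : ℝ) : ℝ :=
  (2 : ℝ) ^ (-(k : ℤ)) * f ((2 : ℝ) ^ k * x) ((2 : ℝ) ^ k * y)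

/-- `x₀ = 0`, `x_k = 2 − 2^{1−k}` for `k ≥ 1`. -/
def xc : ℕ → ℝ
  | 0 => 0
  | (k + 1) => 2 - (2 : ℝ) ^ (1 - ((k : ℤ) + 1))

/-- `y_k^i = i · 2^{1−k}`. -/
def yc (k i : ℕ) : ℝ := (i : ℝ) * (2 : ℝ) ^ (1 - (k : ℤ))

/-- The open square `Q_{k,i} = (x_{k−1}, x_k) × (y_k^i, y_k^{i+1})`. -/
def Qki (k i : ℕ) : Set E2 :=
  {z | z 0 ∈ Set.Ioo (xc (k - 1)) (xc k) ∧ z 1 ∈ Set.Ioo (yc k i) (yc k (i + 1))}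

/-- The triangle `T = {(x,y) : 0 ≤ y ≤ x ≤ 2}`. -/
def Tset : Set E2 := {z | 0 ≤ z 1 ∧ z 1 ≤ z 0 ∧ z 0 ≤ 2}

/-- The open square `Q = (−2,2) × (−2,2)`. -/
def Qsq : Set E2 := {z | z 0 ∈ Set.Ioo (-2 : ℝ) 2 ∧ z 1 ∈ Set.Ioo (-2 : ℝ) 2}

/-- First coordinate of the center of `Q_{k,i}`. -/
def ctrX (k : ℕ) : ℝ := (xc (k - 1) + xc k) / 2

/-- Second coordinate of the center of `Q_{k,i}`. -/
def ctrY (k i : ℕ) : ℝ := (yc k i + yc k (i + 1)) / 2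

/-- The formula for the second component of `p_v` on `Q_{k,i} ∩ T` (in shifted coordinates):
`b_k` if `i = 2^k − 2`, `d_k` if `i` is even (hence `i ≤ 2^k − 4`), `c_k` if `i` is odd
(hence `i ≤ 2^k − 3`). -/
def secondFun (k i : ℕ) (x y : ℝ) : ℝ :=
  if i = 2 ^ k - 2 then resc bFun k x y
  else if i % 2 = 0 then resc dFun k x y
  else resc cFun k x y

/-- The defining properties of the vectorial pyramid `p_v` on the closed square `[−2,2]²`:
on each `Q_{k,i} ∩ T` it is given by the explicit formulas; each component is invariant under
the reflections `(x,y) ↦ (y,x)`, `(x,y) ↦ (−x,y)`, `(x,y) ↦ (x,−y)`; and it vanishes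
on `∂Q`. -/
def PyramidSpec (p : E2 → E2) : Prop :=
  (∀ k : ℕ, 1 ≤ k → ∀ i : ℕ, i ≤ 2 ^ k - 2 → ∀ z ∈ Qki k i ∩ Tset,
      p z 0 = resc aFun k (z 0 - ctrX k) (z 1 - ctrY k i) ∧
      p z 1 = secondFun k i (z 0 - ctrX k) (z 1 - ctrY k i)) ∧
  (∀ x y : ℝ,
      p (pt y x) = p (pt x y) ∧ p (pt (-x) y) = p (pt x y) ∧ p (pt x (-y)) = p (pt x y)) ∧
  (∀ z ∈ frontier Qsq, p z = 0)

/-- The set `Ω^{p}_{A} = {z ∈ Q : p is differentiable at z with Dp(z) = A}`. -/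
def OmegaSet (p : E2 → E2) (A : Matrix (Fin 2) (Fin 2) ℝ) : Set E2 :=
  {z | z ∈ Qsq ∧ HasFDerivAt p (matCLM A) z}

/-! In the coordinates `2^k (z - centre)` every square `Q_{k,i}` becomes `(-1, 1)²`, and its two
diagonals cut it into four triangles. The first component `a` of `p_v` is affine on each of them,
and the second one (`d` on `Q_{k,j}`, `c` on `Q_{k,j+1}`) is affine on at least one half of each
of them; the eight gradients obtained in this way on the two squares are exactly `±A₁, …, ±A₄`.
Each such half-triangle contains a square of side `1/2`, i.e. a square of side `2^{-k}/2` in the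
original coordinates, on which `p_v` is affine with the corresponding derivative; its area
`2^{-2k}/4` exceeds the bound. -/

section faces

variable {X Y : ℝ}

lemma aFun_eq_one_add_fst (h : |Y| ≤ -X) : aFun X Y = 1 + X := by
  obtain ⟨h₁, h₂⟩ := abs_le.1 h
  rw [aFun, min_eq_left (by linarith : 1 + X ≤ 1 - X),
    min_eq_left (le_min (by linarith) (by linarith))]

lemma aFun_eq_one_sub_fst (h : |Y| ≤ X) : aFun X Y = 1 - X := by
  obtain ⟨h₁, h₂⟩ := abs_le.1 h
  rw [aFun, min_eq_right (by linarith : 1 - X ≤ 1 + X),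
    min_eq_left (le_min (by linarith) (by linarith))]

lemma aFun_eq_one_add_snd (h : |X| ≤ -Y) : aFun X Y = 1 + Y := by
  obtain ⟨h₁, h₂⟩ := abs_le.1 h
  rw [aFun, min_eq_left (by linarith : 1 + Y ≤ 1 - Y),
    min_eq_right (le_min (by linarith) (by linarith))]

lemma aFun_eq_one_sub_snd (h : |X| ≤ Y) : aFun X Y = 1 - Y := by
  obtain ⟨h₁, h₂⟩ := abs_le.1 h
  rw [aFun, min_eq_right (by linarith : 1 - Y ≤ 1 + Y),
    min_eq_right (le_min (by linarith) (by linarith))]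

lemma dFun_eq_one_sub_fst (h : |X| ≤ Y) : dFun X Y = 1 - X := by
  rw [dFun, if_pos h]

lemma dFun_eq_one_add_snd (h : |Y| < -X) : dFun X Y = 1 + Y := by
  unfold dFun
  split_ifs <;> cases abs_cases X <;> cases abs_cases Y <;> linarith

lemma dFun_eq_one_add_fst (hX : X < 0) (h : |X| < -Y) : dFun X Y = 1 + X := by
  unfold dFun
  split_ifs <;> cases abs_cases X <;> cases abs_cases Y <;> linarith

lemma dFun_eq_one_sub_snd (hY : 0 < Y) (h : |Y| < X) : dFun X Y = 1 - Y := by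
  unfold dFun
  split_ifs <;> cases abs_cases X <;> cases abs_cases Y <;> linarith

lemma cFun_eq_one_add_fst (hX : X < 0) (h : |X| < Y) : cFun X Y = 1 + X := by
  unfold cFun
  split_ifs <;> cases abs_cases X <;> cases abs_cases Y <;> linarith

lemma cFun_eq_one_sub_snd (h : |Y| < -X) : cFun X Y = 1 - Y := by
  unfold cFun
  split_ifs <;> cases abs_cases X <;> cases abs_cases Y <;> linarith

lemma cFun_eq_one_sub_fst (h : |X| < -Y) : cFun X Y = 1 - X := by
  unfold cFun
  split_ifs <;> cases abs_cases X <;> cases abs_cases Y <;> linarith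

lemma cFun_eq_one_add_snd (hY : Y < 0) (h : |Y| < X) : cFun X Y = 1 + Y := by
  unfold cFun
  split_ifs <;> cases abs_cases X <;> cases abs_cases Y <;> linarith

end faces

lemma two_zpow_neg_mul_two_pow (k : ℕ) : (2 : ℝ) ^ (-(k : ℤ)) * 2 ^ k = 1 := by
  rw [zpow_neg, zpow_natCast, inv_mul_cancel₀ (by positivity)]

lemma resc_eq_of_apply_eq {f : ℝ → ℝ → ℝ} {k : ℕ} {u v α β : ℝ}
    (h : f (2 ^ k * u) (2 ^ k * v) = 1 + α * (2 ^ k * u) + β * (2 ^ k * v)) :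
    resc f k u v = 2 ^ (-(k : ℤ)) + α * u + β * v := by
  rw [resc, h]
  linear_combination (α * u + β * v) * two_zpow_neg_mul_two_pow k

lemma two_zpow_one_sub (k : ℤ) : (2 : ℝ) ^ (1 - k) = 2 * 2 ^ (-k) := by
  rw [sub_eq_neg_add, zpow_add_one₀ two_ne_zero, mul_comm]

lemma xc_eq {k : ℕ} (hk : 1 ≤ k) : xc k = 2 - 2 * 2 ^ (-(k : ℤ)) := by
  obtain ⟨n, rfl⟩ := Nat.exists_eq_add_of_le' hk
  rw [xc, ← two_zpow_one_sub]
  push_cast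
  ring_nf

lemma xc_pred_eq {k : ℕ} (hk : 2 ≤ k) : xc (k - 1) = 2 - 4 * 2 ^ (-(k : ℤ)) := by
  rw [xc_eq (by omega), Nat.cast_pred (by omega), neg_sub, two_zpow_one_sub]
  ring

lemma yc_eq (k i : ℕ) : yc k i = 2 * i * 2 ^ (-(k : ℤ)) := by
  rw [yc, two_zpow_one_sub]
  ring

lemma ctrX_eq {k : ℕ} (hk : 2 ≤ k) : ctrX k = 2 - 3 * 2 ^ (-(k : ℤ)) := by
  rw [ctrX, xc_pred_eq hk, xc_eq (by omega)]
  ring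

lemma ctrY_eq (k i : ℕ) : ctrY k i = (2 * i + 1) * 2 ^ (-(k : ℤ)) := by
  rw [ctrY, yc_eq, yc_eq]
  push_cast
  ring

lemma mem_Qki_iff {k i : ℕ} (hk : 2 ≤ k) {z : E2} :
    z ∈ Qki k i ↔ |z 0 - ctrX k| < 2 ^ (-(k : ℤ)) ∧ |z 1 - ctrY k i| < 2 ^ (-(k : ℤ)) := by
  simp only [Qki, mem_ofPred_eq, mem_Ioo, abs_sub_lt_iff, xc_pred_eq hk, xc_eq (by omega : 1 ≤ k),
    ctrX_eq hk, yc_eq, ctrY_eq]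
  push_cast
  constructor <;> rintro ⟨⟨h₁, h₂⟩, h₃, h₄⟩ <;>
    refine ⟨⟨?_, ?_⟩, ?_, ?_⟩ <;> linarith

lemma Qki_subset_Tset_inter_Qsq {k i : ℕ} (hk : 2 ≤ k) (hi : i + 3 ≤ 2 ^ k) :
    Qki k i ⊆ Tset ∩ Qsq := by
  have hh := two_zpow_neg_mul_two_pow k
  have hpos : (0 : ℝ) < 2 ^ (-(k : ℤ)) := by positivity
  have hi' : ((i : ℝ) + 3) * 2 ^ (-(k : ℤ)) ≤ 1 := by
    rw [← hh, mul_comm]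
    gcongr
    exact_mod_cast hi
  have hi₀ : (0 : ℝ) ≤ i := i.cast_nonneg
  rintro z ⟨⟨hx₁, hx₂⟩, hy₁, hy₂⟩
  rw [xc_pred_eq hk] at hx₁
  rw [xc_eq (by omega)] at hx₂
  rw [yc_eq] at hy₁ hy₂
  push_cast at hy₂
  refine ⟨⟨?_, ?_, ?_⟩, ⟨?_, ?_⟩, ?_, ?_⟩ <;> nlinarith

def openSquare (x y l : ℝ) : Set E2 := {z | z 0 ∈ Ioo x (x + l) ∧ z 1 ∈ Ioo y (y + l)}

lemma isOpen_openSquare (x y l : ℝ) : IsOpen (openSquare x y l) :=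
  (isOpen_Ioo.preimage (EuclideanSpace.proj 0).continuous).inter
    (isOpen_Ioo.preimage (EuclideanSpace.proj 1).continuous)

lemma volume_openSquare (x y l : ℝ) :
    volume (openSquare x y l) = ENNReal.ofReal l * ENNReal.ofReal l := by
  have hset : openSquare x y l
      = (MeasurableEquiv.toLp 2 (Fin 2 → ℝ)).symm ⁻¹'
        univ.pi ![Ioo x (x + l), Ioo y (y + l)] := by
    ext z
    simp only [openSquare, mem_ofPred_eq, mem_preimage, mem_univ_pi, Fin.forall_fin_two]
    rfl
  rw [hset,
    (EuclideanSpace.volume_preserving_symm_measurableEquiv_toLp _).measure_preimage_equiv,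
    volume_pi_pi, Fin.prod_univ_two]
  simp

lemma hasFDerivAt_of_eqOn_affine {E F : Type*} [NormedAddCommGroup E] [NormedSpace ℝ E]
    [NormedAddCommGroup F] [NormedSpace ℝ F] {f : E → F} {L : E →L[ℝ] F} {U : Set E}
    (hU : IsOpen U) (c : E) (w : F) (hf : EqOn f (fun y => L (y - c) + w) U) {z : E}
    (hz : z ∈ U) : HasFDerivAt f L z := by
  have hL : HasFDerivAt (fun y => L (y - c) + w) L z := by
    convert L.hasFDerivAt.add_const (w - L c) using 2 with y
    rw [map_sub]
    abel
  exact hL.congr_of_eventuallyEq (Filter.eventuallyEq_of_mem (hU.mem_nhds hz) hf)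

lemma matCLM_apply (A : Matrix (Fin 2) (Fin 2) ℝ) (v : E2) (i : Fin 2) :
    matCLM A v i = A i 0 * v 0 + A i 1 * v 1 := by
  simp [matCLM, Matrix.toEuclideanLin, Matrix.mulVec, dotProduct, Fin.sum_univ_two]

lemma two_pow_mul_mem_Ioo {k : ℕ} {u t : ℝ}
    (hu : u ∈ Ioo (t * 2 ^ (-(k : ℤ))) (t * 2 ^ (-(k : ℤ)) + 2 ^ (-(k : ℤ)) / 2)) :
    2 ^ k * u ∈ Ioo t (t + 1 / 2) := by
  have hscale (s : ℝ) : 2 ^ k * (s * 2 ^ (-(k : ℤ))) = s := by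
    rw [mul_left_comm, mul_comm (2 ^ k : ℝ), two_zpow_neg_mul_two_pow, mul_one]
  constructor
  · calc t = 2 ^ k * (t * 2 ^ (-(k : ℤ))) := (hscale t).symm
      _ < 2 ^ k * u := by gcongr; exact hu.1
  · calc 2 ^ k * u < 2 ^ k * ((t + 1 / 2) * 2 ^ (-(k : ℤ))) := by gcongr; linarith [hu.2]
      _ = t + 1 / 2 := hscale _

theorem ofReal_le_volume_Qki_inter_omegaSet {p : E2 → E2} {k i : ℕ} (hk : 2 ≤ k)
    (hi : i + 3 ≤ 2 ^ k) {f g : ℝ → ℝ → ℝ}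
    (hp : ∀ z ∈ Qki k i ∩ Tset, p z 0 = resc f k (z 0 - ctrX k) (z 1 - ctrY k i) ∧
      p z 1 = resc g k (z 0 - ctrX k) (z 1 - ctrY k i))
    (A : Matrix (Fin 2) (Fin 2) ℝ) (a b : ℝ) (ha : a ∈ Icc (-1 : ℝ) (1 / 2))
    (hb : b ∈ Icc (-1 : ℝ) (1 / 2))
    (hf : ∀ X ∈ Ioo a (a + 1 / 2), ∀ Y ∈ Ioo b (b + 1 / 2),
      f X Y = 1 + A 0 0 * X + A 0 1 * Y)
    (hg : ∀ X ∈ Ioo a (a + 1 / 2), ∀ Y ∈ Ioo b (b + 1 / 2),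
      g X Y = 1 + A 1 0 * X + A 1 1 * Y) :
    ENNReal.ofReal ((1 / 8 : ℝ) * (1 / 2 ^ k) ^ 2) ≤ volume (Qki k i ∩ OmegaSet p A) := by
  set h : ℝ := 2 ^ (-(k : ℤ)) with hh
  have hh₀ : 0 < h := by positivity
  have hhk : h * 2 ^ k = 1 := two_zpow_neg_mul_two_pow k
  set R := openSquare (ctrX k + a * h) (ctrY k i + b * h) (h / 2)
  have hRQ : R ⊆ Qki k i := by
    rintro z ⟨⟨hx₁, hx₂⟩, hy₁, hy₂⟩
    rw [mem_Qki_iff hk, abs_sub_lt_iff, abs_sub_lt_iff]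
    refine ⟨⟨?_, ?_⟩, ?_, ?_⟩ <;> nlinarith [ha.1, ha.2, hb.1, hb.2]
  have hRT : R ⊆ Tset ∩ Qsq := hRQ.trans (Qki_subset_Tset_inter_Qsq hk hi)
  have hlocal : ∀ z ∈ R, 2 ^ k * (z 0 - ctrX k) ∈ Ioo a (a + 1 / 2) ∧
      2 ^ k * (z 1 - ctrY k i) ∈ Ioo b (b + 1 / 2) := by
    rintro z ⟨⟨hx₁, hx₂⟩, hy₁, hy₂⟩
    exact ⟨two_pow_mul_mem_Ioo ⟨by linarith, by linarith⟩,
      two_pow_mul_mem_Ioo ⟨by linarith, by linarith⟩⟩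
  have haffine : EqOn p (fun y => matCLM A (y - pt (ctrX k) (ctrY k i)) + pt h h) R := by
    intro z hz
    obtain ⟨hU, hV⟩ := hlocal z hz
    obtain ⟨h₀, h₁⟩ := hp z ⟨hRQ hz, (hRT hz).1⟩
    rw [resc_eq_of_apply_eq (hf _ hU _ hV), ← hh] at h₀
    rw [resc_eq_of_apply_eq (hg _ hU _ hV), ← hh] at h₁
    ext idx
    fin_cases idx <;>
      simp only [Fin.zero_eta, Fin.mk_one, Fin.isValue, pt, map_sub, PiLp.add_apply,
        PiLp.sub_apply, matCLM_apply, Matrix.cons_val_zero, Matrix.cons_val_one,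
        Matrix.cons_val_fin_one]
    · linear_combination h₀
    · linear_combination h₁
  have hRΩ : R ⊆ Qki k i ∩ OmegaSet p A := fun z hz =>
    ⟨hRQ hz, (hRT hz).2, hasFDerivAt_of_eqOn_affine (isOpen_openSquare _ _ _) _ _ haffine hz⟩
  calc ENNReal.ofReal ((1 / 8 : ℝ) * (1 / 2 ^ k) ^ 2)
      ≤ ENNReal.ofReal (h / 2) * ENNReal.ofReal (h / 2) := by
        rw [← ENNReal.ofReal_mul (by positivity), hh, zpow_neg, zpow_natCast, ← one_div]
        apply ENNReal.ofReal_le_ofReal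
        nlinarith [sq_nonneg ((1 : ℝ) / 2 ^ k)]
    _ = volume R := (volume_openSquare _ _ _).symm
    _ ≤ volume (Qki k i ∩ OmegaSet p A) := measure_mono hRΩ

lemma secondFun_eq_of_even {k i : ℕ} (hi : i % 2 = 0) (hik : i ≠ 2 ^ k - 2) :
    secondFun k i = resc dFun k := by
  ext x y
  rw [secondFun, if_neg hik, if_pos hi]

lemma secondFun_eq_of_odd {k i : ℕ} (hi : i % 2 = 1) (hik : i ≠ 2 ^ k - 2) :
    secondFun k i = resc cFun k := by
  ext x y
  rw [secondFun, if_neg hik, if_neg (by omega)]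

theorem ofReal_le_volume_Qki_inter_omegaSet_of_even {p : E2 → E2} (hp : PyramidSpec p)
    {k i : ℕ} (hk : 2 ≤ k) (hi : i % 2 = 0) (hik : i + 4 ≤ 2 ^ k)
    {A : Matrix (Fin 2) (Fin 2) ℝ} (hA : A ∈ ({A1, -A1, A2, -A2} : Set _)) :
    ENNReal.ofReal ((1 / 8 : ℝ) * (1 / 2 ^ k) ^ 2) ≤ volume (Qki k i ∩ OmegaSet p A) := by
  have hpi : ∀ z ∈ Qki k i ∩ Tset, p z 0 = resc aFun k (z 0 - ctrX k) (z 1 - ctrY k i) ∧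
      p z 1 = resc dFun k (z 0 - ctrX k) (z 1 - ctrY k i) := by
    simpa only [secondFun_eq_of_even hi (by omega : i ≠ 2 ^ k - 2)] using
      hp.1 k (by omega) i (by omega)
  have hik' : i + 3 ≤ 2 ^ k := by omega
  simp only [mem_insert_iff, mem_singleton_iff] at hA
  rcases hA with rfl | rfl | rfl | rfl
  -- `(a, b)` is the corner of a square of side `1/2`, in the coordinates `2^k (z - centre)`,
  -- inside the face of `(a, d)` where the gradient is the given matrix.
  · refine ofReal_le_volume_Qki_inter_omegaSet hk hik' hpi A1 (-1) (-1 / 2)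
      (by norm_num) (by norm_num) ?_ ?_ <;> rintro X ⟨hX₁, hX₂⟩ Y ⟨hY₁, hY₂⟩
    · rw [aFun_eq_one_add_fst (abs_le.2 ⟨by linarith, by linarith⟩)]
      simp [A1]
    · rw [dFun_eq_one_add_snd (abs_lt.2 ⟨by linarith, by linarith⟩)]
      simp [A1]
  · refine ofReal_le_volume_Qki_inter_omegaSet hk hik' hpi (-A1) (1 / 2) 0
      (by norm_num) (by norm_num) ?_ ?_ <;> rintro X ⟨hX₁, hX₂⟩ Y ⟨hY₁, hY₂⟩
    · rw [aFun_eq_one_sub_fst (abs_le.2 ⟨by linarith, by linarith⟩)]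
      simp [A1, sub_eq_add_neg]
    · rw [dFun_eq_one_sub_snd (by linarith) (abs_lt.2 ⟨by linarith, by linarith⟩)]
      simp [A1, sub_eq_add_neg]
  · refine ofReal_le_volume_Qki_inter_omegaSet hk hik' hpi A2 (-1 / 2) (-1)
      (by norm_num) (by norm_num) ?_ ?_ <;> rintro X ⟨hX₁, hX₂⟩ Y ⟨hY₁, hY₂⟩
    · rw [aFun_eq_one_add_snd (abs_le.2 ⟨by linarith, by linarith⟩)]
      simp [A2]
    · rw [dFun_eq_one_add_fst (by linarith) (abs_lt.2 ⟨by linarith, by linarith⟩)]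
      simp [A2]
  · refine ofReal_le_volume_Qki_inter_omegaSet hk hik' hpi (-A2) 0 (1 / 2)
      (by norm_num) (by norm_num) ?_ ?_ <;> rintro X ⟨hX₁, hX₂⟩ Y ⟨hY₁, hY₂⟩
    · rw [aFun_eq_one_sub_snd (abs_le.2 ⟨by linarith, by linarith⟩)]
      simp [A2, sub_eq_add_neg]
    · rw [dFun_eq_one_sub_fst (abs_le.2 ⟨by linarith, by linarith⟩)]
      simp [A2, sub_eq_add_neg]

theorem ofReal_le_volume_Qki_inter_omegaSet_of_odd {p : E2 → E2} (hp : PyramidSpec p)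
    {k i : ℕ} (hk : 2 ≤ k) (hi : i % 2 = 1) (hik : i + 3 ≤ 2 ^ k)
    {A : Matrix (Fin 2) (Fin 2) ℝ} (hA : A ∈ ({A3, -A3, A4, -A4} : Set _)) :
    ENNReal.ofReal ((1 / 8 : ℝ) * (1 / 2 ^ k) ^ 2) ≤ volume (Qki k i ∩ OmegaSet p A) := by
  have hpi : ∀ z ∈ Qki k i ∩ Tset, p z 0 = resc aFun k (z 0 - ctrX k) (z 1 - ctrY k i) ∧
      p z 1 = resc cFun k (z 0 - ctrX k) (z 1 - ctrY k i) := by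
    simpa only [secondFun_eq_of_odd hi (by omega : i ≠ 2 ^ k - 2)] using
      hp.1 k (by omega) i (by omega)
  simp only [mem_insert_iff, mem_singleton_iff] at hA
  rcases hA with rfl | rfl | rfl | rfl
  · refine ofReal_le_volume_Qki_inter_omegaSet hk hik hpi A3 (1 / 2) (-1 / 2)
      (by norm_num) (by norm_num) ?_ ?_ <;> rintro X ⟨hX₁, hX₂⟩ Y ⟨hY₁, hY₂⟩
    · rw [aFun_eq_one_sub_fst (abs_le.2 ⟨by linarith, by linarith⟩)]
      simp [A3, sub_eq_add_neg]
    · rw [cFun_eq_one_add_snd (by linarith) (abs_lt.2 ⟨by linarith, by linarith⟩)]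
      simp [A3]
  · refine ofReal_le_volume_Qki_inter_omegaSet hk hik hpi (-A3) (-1) 0
      (by norm_num) (by norm_num) ?_ ?_ <;> rintro X ⟨hX₁, hX₂⟩ Y ⟨hY₁, hY₂⟩
    · rw [aFun_eq_one_add_fst (abs_le.2 ⟨by linarith, by linarith⟩)]
      simp [A3]
    · rw [cFun_eq_one_sub_snd (abs_lt.2 ⟨by linarith, by linarith⟩)]
      simp [A3, sub_eq_add_neg]
  · refine ofReal_le_volume_Qki_inter_omegaSet hk hik hpi A4 (-1 / 2) (1 / 2)
      (by norm_num) (by norm_num) ?_ ?_ <;> rintro X ⟨hX₁, hX₂⟩ Y ⟨hY₁, hY₂⟩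
    · rw [aFun_eq_one_sub_snd (abs_le.2 ⟨by linarith, by linarith⟩)]
      simp [A4, sub_eq_add_neg]
    · rw [cFun_eq_one_add_fst (by linarith) (abs_lt.2 ⟨by linarith, by linarith⟩)]
      simp [A4]
  · refine ofReal_le_volume_Qki_inter_omegaSet hk hik hpi (-A4) 0 (-1)
      (by norm_num) (by norm_num) ?_ ?_ <;> rintro X ⟨hX₁, hX₂⟩ Y ⟨hY₁, hY₂⟩
    · rw [aFun_eq_one_add_snd (abs_le.2 ⟨by linarith, by linarith⟩)]
      simp [A4]
    · rw [cFun_eq_one_sub_fst (abs_lt.2 ⟨by linarith, by linarith⟩)]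
      simp [A4, sub_eq_add_neg]

/-- for `k > 1` and an even index `j ≤ 2^k − 4` (so that both `Q_{k,j}` and
`Q_{k,j+1}` are defined), for every matrix `±A_i ∈ E`, the Lebesgue measure of
`(Q_{k,j} ∪ Q_{k,j+1}) ∩ Ω^{p_v}_{±i}` is at least `(1/8)·(1/2^k)²`. -/
theorem stmt2 (p : E2 → E2) (hp : PyramidSpec p) (k : ℕ) (hk : 1 < k)
    (j : ℕ) (hjeven : Even j) (hjle : j ≤ 2 ^ k - 4)
    (A : Matrix (Fin 2) (Fin 2) ℝ) (hA : A ∈ Eset) :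
    ENNReal.ofReal ((1 / 8 : ℝ) * (1 / 2 ^ k) ^ 2) ≤
      volume ((Qki k j ∪ Qki k (j + 1)) ∩ OmegaSet p A) := by
  have h4 : 4 ≤ 2 ^ k := Nat.pow_le_pow_right two_pos hk
  have hj : j % 2 = 0 := Nat.even_iff.1 hjeven
  have hA' : A ∈ ({A1, -A1, A2, -A2} : Set _) ∨ A ∈ ({A3, -A3, A4, -A4} : Set _) := by
    simpa only [Eset, mem_insert_iff, mem_singleton_iff, or_assoc] using hA
  rcases hA' with hA | hA
  · exact (ofReal_le_volume_Qki_inter_omegaSet_of_even hp hk hj (by omega) hA).trans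
      (measure_mono (inter_subset_inter_left _ subset_union_left))
  · exact (ofReal_le_volume_Qki_inter_omegaSet_of_odd hp hk (by omega) (by omega) hA).trans
      (measure_mono (inter_subset_inter_left _ subset_union_right))

end
end

section
/- Let Ω ⊂ ℝⁿ be open and bounded and let {Ω_i}_{i∈I} be a finite or countable family of pairwise disjoint open subsets of Ω with Lⁿ(Ω ∖ ∪_i Ω_i) = 0. Let L > 0 and N ≥ 1, and for each i let u_i : closure(Ω_i) → ℝ^N be L-Lipschitz with u_i = 0 on ∂Ω_i. Define u : closure(Ω) → ℝ^N by u = u_i on Ω_i for each i, and u = 0 on closure(Ω) ∖ ∪_i Ω_i. Then: (1) u is Lipschitz with Lipschitz constant at most 2L; (2) |u(x)| ≤ L·d(x, ∂Ω) for every x ∈ closure(Ω), so in particular u = 0 on ∂Ω; (3) if moreover E ⊂ ℝ^{N×n} is a set of matrices and, for each i, u_i is differentiable at Lⁿ-a.e. point of Ω_i with Du_i ∈ E there, then u is differentiable at Lⁿ-a.e. point of Ω with Du ∈ E. -/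
/-!
If `x` lies in a piece `Ωᵢ` and `y` does not, a point `z` of the complement of `Ωᵢ` nearest to `x`
lies on `∂Ωᵢ` and `|x - z| ≤ |x - y|`; since `uᵢ(z) = 0`, this gives `|u(x)| ≤ L|x - y|`.
Two points in a common piece are handled by the Lipschitz bound of that piece, and otherwise
`|u(x) - u(y)| ≤ |u(x)| + |u(y)| ≤ 2L|x - y|`. Taking for `y` a nearest point of `∂Ω` gives the
bound by `L·d(x, ∂Ω)`. Differentiability is local, so on each open piece `u` inherits the
derivative of `uᵢ`, and the pieces cover `Ω` up to a null set.
-/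

open MeasureTheory Set Filter
open scoped NNReal

section Lipschitz

variable {E F ι : Type*} [NormedAddCommGroup E] [NormedSpace ℝ E] [FiniteDimensional ℝ E]
  [SeminormedAddCommGroup F] {L : ℝ≥0}

theorem LipschitzOnWith.norm_le_mul_dist_of_eq_zero_on_frontier {f : E → F} {s : Set E}
    (hf : LipschitzOnWith L f (closure s)) (h0 : ∀ z ∈ frontier s, f z = 0)
    {x y : E} (hx : x ∈ s) (hy : y ∉ s) : ‖f x‖ ≤ L * dist x y := by
  obtain ⟨z, hz, hzd⟩ :=
    exists_mem_frontier_infDist_compl_eq_dist hx ((ne_univ_iff_exists_notMem s).2 ⟨y, hy⟩)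
  calc ‖f x‖ = dist (f x) (f z) := by rw [h0 z hz, dist_zero_right]
    _ ≤ L * dist x z := hf.dist_le_mul x (subset_closure hx) z (frontier_subset_closure hz)
    _ ≤ L * dist x y := by
      gcongr
      rw [← hzd]
      exact Metric.infDist_le_dist_of_mem hy

variable {s : ι → Set E} {v : ι → E → F} {u : E → F} {T : Set E}

theorem norm_le_mul_dist_of_gluing (hvlip : ∀ i, LipschitzOnWith L (v i) (closure (s i)))
    (hvbd : ∀ i, ∀ x ∈ frontier (s i), v i x = 0) (hu1 : ∀ i, ∀ x ∈ s i, u x = v i x)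
    (hu2 : ∀ x ∈ T \ ⋃ i, s i, u x = 0) {x y : E} (hx : x ∈ T) (hy : ∀ i, x ∈ s i → y ∉ s i) :
    ‖u x‖ ≤ L * dist x y := by
  by_cases hxs : ∃ i, x ∈ s i
  · obtain ⟨i, hi⟩ := hxs
    rw [hu1 i x hi]
    exact (hvlip i).norm_le_mul_dist_of_eq_zero_on_frontier (hvbd i) hi (hy i hi)
  · rw [hu2 x ⟨hx, by simpa using hxs⟩, norm_zero]
    positivity

theorem lipschitzOnWith_two_mul_of_gluing (hvlip : ∀ i, LipschitzOnWith L (v i) (closure (s i)))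
    (hvbd : ∀ i, ∀ x ∈ frontier (s i), v i x = 0) (hu1 : ∀ i, ∀ x ∈ s i, u x = v i x)
    (hu2 : ∀ x ∈ T \ ⋃ i, s i, u x = 0) : LipschitzOnWith (2 * L) u T := by
  refine LipschitzOnWith.of_dist_le_mul fun x hx y hy => ?_
  push_cast
  by_cases hxy : ∃ i, x ∈ s i ∧ y ∈ s i
  · obtain ⟨i, hxi, hyi⟩ := hxy
    rw [hu1 i x hxi, hu1 i y hyi]
    calc dist (v i x) (v i y) ≤ L * dist x y :=
          (hvlip i).dist_le_mul x (subset_closure hxi) y (subset_closure hyi)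
      _ ≤ 2 * L * dist x y := by gcongr; linarith [L.coe_nonneg]
  · simp only [not_exists, not_and] at hxy
    have hux := norm_le_mul_dist_of_gluing hvlip hvbd hu1 hu2 hx hxy
    have huy := norm_le_mul_dist_of_gluing hvlip hvbd hu1 hu2 hy
      (fun i hyi hxi => hxy i hxi hyi)
    rw [dist_comm y x] at huy
    calc dist (u x) (u y) ≤ ‖u x‖ + ‖u y‖ := dist_le_norm_add_norm _ _
      _ ≤ 2 * L * dist x y := by linarith

theorem norm_le_mul_infDist_frontier_of_gluing
    (hvlip : ∀ i, LipschitzOnWith L (v i) (closure (s i)))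
    (hvbd : ∀ i, ∀ x ∈ frontier (s i), v i x = 0) (hu1 : ∀ i, ∀ x ∈ s i, u x = v i x)
    (hu2 : ∀ x ∈ T \ ⋃ i, s i, u x = 0) {Ω : Set E} (hΩ : IsOpen Ω) (hsub : ∀ i, s i ⊆ Ω)
    (hfr : (frontier Ω).Nonempty) {x : E} (hx : x ∈ T) :
    ‖u x‖ ≤ L * Metric.infDist x (frontier Ω) := by
  obtain ⟨z, hz, hzd⟩ := isClosed_frontier.exists_infDist_eq_dist hfr x
  rw [hzd]
  refine norm_le_mul_dist_of_gluing hvlip hvbd hu1 hu2 hx fun i _ hzi => hz.2 ?_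
  rw [hΩ.interior_eq]
  exact hsub i hzi

end Lipschitz

theorem ae_restrict_of_ae_restrict_cover {α ι : Type*} [MeasurableSpace α] [Countable ι]
    {μ : Measure α} {Ω : Set α} {s : ι → Set α} {p : α → Prop}
    (hcover : μ (Ω \ ⋃ i, s i) = 0) (h : ∀ i, ∀ᵐ x ∂μ.restrict (s i), p x) :
    ∀ᵐ x ∂μ.restrict Ω, p x :=
  ae_mono (Measure.restrict_mono_ae (ae_le_set.2 hcover)) ((ae_restrict_iUnion_iff s p).2 h)

theorem ae_exists_hasFDerivAt_of_gluing {𝕜 E F ι α : Type*} [NontriviallyNormedField 𝕜]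
    [NormedAddCommGroup E] [NormedSpace 𝕜 E] [MeasurableSpace E] [OpensMeasurableSpace E]
    [NormedAddCommGroup F]
    [NormedSpace 𝕜 F] [Countable ι] {μ : Measure E} {Ω : Set E} {s : ι → Set E}
    {v : ι → E → F} {u : E → F} (hs : ∀ i, IsOpen (s i)) (hcover : μ (Ω \ ⋃ i, s i) = 0)
    (hu : ∀ i, ∀ x ∈ s i, u x = v i x) (g : α → E →L[𝕜] F) (S : Set α)
    (hv : ∀ i, ∀ᵐ x ∂μ.restrict (s i), ∃ a ∈ S, HasFDerivAt (v i) (g a) x) :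
    ∀ᵐ x ∂μ.restrict Ω, ∃ a ∈ S, HasFDerivAt u (g a) x := by
  refine ae_restrict_of_ae_restrict_cover hcover fun i => ?_
  filter_upwards [hv i, ae_restrict_mem (hs i).measurableSet] with x ⟨a, ha, hvx⟩ hx
  exact ⟨a, ha, hvx.congr_of_eventuallyEq (eventuallyEq_of_mem ((hs i).mem_nhds hx) (hu i))⟩

theorem stmt5_general (n N : ℕ) (hn : 1 ≤ n)
    (Ω : Set (EuclideanSpace ℝ (Fin n))) (hΩo : IsOpen Ω) (hΩb : Bornology.IsBounded Ω)
    (Ωi : ℕ → Set (EuclideanSpace ℝ (Fin n)))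
    (hio : ∀ i, IsOpen (Ωi i)) (hisub : ∀ i, Ωi i ⊆ Ω)
    (hcover : volume (Ω \ ⋃ i, Ωi i) = 0)
    (L : ℝ≥0)
    (v : ℕ → EuclideanSpace ℝ (Fin n) → EuclideanSpace ℝ (Fin N))
    (hvlip : ∀ i, LipschitzOnWith L (v i) (closure (Ωi i)))
    (hvbd : ∀ i, ∀ x ∈ frontier (Ωi i), v i x = 0)
    (u : EuclideanSpace ℝ (Fin n) → EuclideanSpace ℝ (Fin N))
    (hu1 : ∀ i, ∀ x ∈ Ωi i, u x = v i x)
    (hu2 : ∀ x ∈ closure Ω \ ⋃ i, Ωi i, u x = 0) :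
    LipschitzOnWith (2 * L) u (closure Ω) ∧
    (∀ x ∈ closure Ω, ‖u x‖ ≤ (L : ℝ) * Metric.infDist x (frontier Ω)) ∧
    (∀ x ∈ frontier Ω, u x = 0) ∧
    (∀ E : Set (Matrix (Fin N) (Fin n) ℝ),
      (∀ i, ∀ᵐ x ∂(volume.restrict (Ωi i)), ∃ A ∈ E,
        HasFDerivAt (v i) (LinearMap.toContinuousLinearMap (Matrix.toEuclideanLin A)) x) →
      ∀ᵐ x ∂(volume.restrict Ω), ∃ A ∈ E,
        HasFDerivAt u (LinearMap.toContinuousLinearMap (Matrix.toEuclideanLin A)) x) := by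
  have : Nonempty (Fin n) := ⟨⟨0, hn⟩⟩
  have hfr : ∀ x ∈ closure Ω, (frontier Ω).Nonempty := fun x hx =>
    nonempty_frontier_iff.2 ⟨closure_nonempty_iff.1 ⟨x, hx⟩,
      fun h => NormedSpace.unbounded_univ ℝ _ (h ▸ hΩb)⟩
  have hdist : ∀ x ∈ closure Ω, ‖u x‖ ≤ L * Metric.infDist x (frontier Ω) := fun x hx =>
    norm_le_mul_infDist_frontier_of_gluing hvlip hvbd hu1 hu2 hΩo hisub (hfr x hx) hx
  refine ⟨lipschitzOnWith_two_mul_of_gluing hvlip hvbd hu1 hu2, hdist, fun x hx => ?_,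
    fun E hE => ae_exists_hasFDerivAt_of_gluing hio hcover hu1 _ E hE⟩
  simpa [Metric.infDist_zero_of_mem hx] using hdist x (frontier_subset_closure hx)

/-- gluing of Lipschitz maps vanishing on the boundaries of a partition of `Ω`
into countably many disjoint open sets. The glued map is `2L`-Lipschitz on `closure Ω`,
satisfies `|u(x)| ≤ L·d(x,∂Ω)` (hence vanishes on `∂Ω`), and if each piece is a.e.
differentiable with derivative in a set of matrices `E`, then so is the glued map on `Ω`. -/
theorem stmt5 (n N : ℕ) (hn : 1 ≤ n) (hN : 1 ≤ N)
    (Ω : Set (EuclideanSpace ℝ (Fin n))) (hΩo : IsOpen Ω) (hΩb : Bornology.IsBounded Ω)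
    (Ωi : ℕ → Set (EuclideanSpace ℝ (Fin n)))
    (hio : ∀ i, IsOpen (Ωi i)) (hisub : ∀ i, Ωi i ⊆ Ω)
    (hdisj : Pairwise fun i j => Disjoint (Ωi i) (Ωi j))
    (hcover : volume (Ω \ ⋃ i, Ωi i) = 0)
    (L : ℝ≥0) (hL : 0 < L)
    (v : ℕ → EuclideanSpace ℝ (Fin n) → EuclideanSpace ℝ (Fin N))
    (hvlip : ∀ i, LipschitzOnWith L (v i) (closure (Ωi i)))
    (hvbd : ∀ i, ∀ x ∈ frontier (Ωi i), v i x = 0)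
    (u : EuclideanSpace ℝ (Fin n) → EuclideanSpace ℝ (Fin N))
    (hu1 : ∀ i, ∀ x ∈ Ωi i, u x = v i x)
    (hu2 : ∀ x ∈ closure Ω \ ⋃ i, Ωi i, u x = 0) :
    LipschitzOnWith (2 * L) u (closure Ω) ∧
    (∀ x ∈ closure Ω, ‖u x‖ ≤ (L : ℝ) * Metric.infDist x (frontier Ω)) ∧
    (∀ x ∈ frontier Ω, u x = 0) ∧
    (∀ E : Set (Matrix (Fin N) (Fin n) ℝ),
      (∀ i, ∀ᵐ x ∂(volume.restrict (Ωi i)), ∃ A ∈ E,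
        HasFDerivAt (v i) (LinearMap.toContinuousLinearMap (Matrix.toEuclideanLin A)) x) →
      ∀ᵐ x ∂(volume.restrict Ω), ∃ A ∈ E,
        HasFDerivAt u (LinearMap.toContinuousLinearMap (Matrix.toEuclideanLin A)) x) :=
  stmt5_general n N hn Ω hΩo hΩb Ωi hio hisub hcover L v hvlip hvbd u hu1 hu2
end

section
/- (Cellina pyramid) Let ξ₁, …, ξ_l ∈ ℝⁿ be pairwise distinct vectors such that 0 lies in the interior of their convex hull, let x₀ ∈ ℝⁿ and r > 0. Define p(x) = r − max_{1≤i≤l} ⟨ξ_i, x − x₀⟩ and P = {x ∈ ℝⁿ : p(x) ≥ 0}. Then P is a compact convex set with x₀ in its interior; p is Lipschitz on ℝⁿ (with constant max_i |ξ_i|), p > 0 on the interior of P and p = 0 on ∂P; and at Lebesgue-almost every x ∈ interior(P) the function p is differentiable with ∇p(x) ∈ {−ξ₁, …, −ξ_l}. In particular p is a W^{1,∞}_0(P) function whose gradient takes a.e. only the finitely many values −ξ_i. -/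
/-!
`p` is the minimum of the affine functions `r - ⟪ξ i, x - x₀⟫`, so `P` is a finite intersection
of closed half-spaces, `p` is Lipschitz with the largest slope `‖ξ i‖`, and wherever `p` is
differentiable it touches from below a face attaining the minimum, whose gradient `-ξ i` it
must share; Rademacher's theorem makes this an a.e. statement. As `0` is interior to the hull of
the `ξ i`, `max_i ⟪ξ i, u⟫ ≥ c ‖u‖` for some `c > 0`, which bounds `P`. Finally,
`max_i ⟪ξ i, x - x₀⟫` is positively homogeneous in `x - x₀`, so a point where `p` vanishes is a
limit of points beyond it on the ray from `x₀`, outside `P`.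
-/

open MeasureTheory Set Filter Topology
open scoped ENNReal NNReal RealInnerProductSpace

theorem LipschitzWith.ciSup {α ι : Type*} [PseudoMetricSpace α] [Finite ι] [Nonempty ι]
    {f : ι → α → ℝ} {K : ℝ≥0} (hf : ∀ i, LipschitzWith K (f i)) :
    LipschitzWith K fun x => ⨆ i, f i x := by
  refine LipschitzWith.of_le_add_mul K fun x y => ciSup_le fun i => ?_
  calc f i x ≤ f i y + K * dist x y := by
        linarith [le_abs_self (f i x - f i y), (hf i).dist_le_mul x y, Real.dist_eq (f i x) (f i y)]
    _ ≤ (⨆ j, f j y) + K * dist x y := by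
        gcongr; exact le_ciSup (Set.finite_range fun j => f j y).bddAbove i

theorem DifferentiableAt.hasFDerivAt_of_eventually_le_of_eq {E : Type*} [NormedAddCommGroup E]
    [NormedSpace ℝ E] {f g : E → ℝ} {g' : E →L[ℝ] ℝ} {x : E} (hf : DifferentiableAt ℝ f x)
    (hg : HasFDerivAt g g' x) (hle : ∀ᶠ y in 𝓝 x, f y ≤ g y) (heq : f x = g x) :
    HasFDerivAt f g' x := by
  have hmax : IsLocalMax (fun y => f y - g y) x := hle.mono fun y hy => by
    simp only [heq, sub_self]; linarith
  have hzero := hmax.hasFDerivAt_eq_zero (hf.hasFDerivAt.sub hg)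
  rw [sub_eq_zero] at hzero
  exact hzero ▸ hf.hasFDerivAt

section MaxOfInner

variable {E ι : Type*} [NormedAddCommGroup E] [InnerProductSpace ℝ E]

theorem hasGradientAt_const_sub_inner_sub [CompleteSpace E] (a : ℝ) (v x₀ x : E) :
    HasGradientAt (fun y => a - ⟪v, y - x₀⟫) (-v) x := by
  have hfun : (fun y => a - ⟪v, y - x₀⟫) =
      fun y => a - (InnerProductSpace.toDual ℝ E v y - ⟪v, x₀⟫) := by
    funext y; rw [InnerProductSpace.toDual_apply_apply, inner_sub_right]
  rw [hasGradientAt_iff_hasFDerivAt, map_neg, hfun]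
  exact (((InnerProductSpace.toDual ℝ E v).hasFDerivAt).sub_const _).const_sub a

variable (ξ : ι → E)

theorem ciSup_inner_smul_of_nonneg {t : ℝ} (ht : 0 ≤ t) (u : E) :
    ⨆ i, ⟪ξ i, t • u⟫ = t * ⨆ i, ⟪ξ i, u⟫ := by
  simp_rw [real_inner_smul_right]
  exact (Real.mul_iSup_of_nonneg ht _).symm

def cellinaPyramid (x₀ : E) (r : ℝ) : Set E := {x | ⨆ i, ⟪ξ i, x - x₀⟫ ≤ r}

theorem ciSup_inner_sub_lt_of_mem_interior {x₀ : E} {r : ℝ} (hr : 0 < r) {x : E}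
    (hx : x ∈ interior (cellinaPyramid ξ x₀ r)) : ⨆ i, ⟪ξ i, x - x₀⟫ < r := by
  have hray : Tendsto (fun t : ℝ => x₀ + t • (x - x₀)) (𝓝[>] 1) (𝓝 x) := by
    have hcont : Continuous fun t : ℝ => x₀ + t • (x - x₀) := by fun_prop
    simpa using (hcont.tendsto 1).mono_left nhdsWithin_le_nhds
  obtain ⟨t, ht_mem, ht1⟩ :=
    ((hray.eventually (isOpen_interior.mem_nhds hx)).and self_mem_nhdsWithin).exists
  have hle := interior_subset ht_mem
  simp only [cellinaPyramid, mem_ofPred_eq, add_sub_cancel_left,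
    ciSup_inner_smul_of_nonneg ξ (zero_le_one.trans (le_of_lt ht1))] at hle
  have ht1 : 1 < t := ht1
  by_contra! hge
  nlinarith

variable [Finite ι]

theorem inner_le_ciSup_inner (i : ι) (u : E) : ⟪ξ i, u⟫ ≤ ⨆ j, ⟪ξ j, u⟫ :=
  le_ciSup (Set.finite_range fun j => ⟪ξ j, u⟫).bddAbove i

theorem inner_le_ciSup_inner_of_mem_convexHull {w : E} (hw : w ∈ convexHull ℝ (range ξ))
    (u : E) : ⟪w, u⟫ ≤ ⨆ i, ⟪ξ i, u⟫ := by
  refine convexHull_min (t := {y | ⟪y, u⟫ ≤ ⨆ i, ⟪ξ i, u⟫}) ?_ ?_ hw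
  · rintro _ ⟨i, rfl⟩
    exact inner_le_ciSup_inner ξ i u
  · exact convex_halfSpace_le
      ⟨fun a b => inner_add_left a b u, fun c a => real_inner_smul_left a u c⟩ _

variable [Nonempty ι]

theorem exists_pos_mul_norm_le_ciSup_inner (h0 : (0 : E) ∈ interior (convexHull ℝ (range ξ))) :
    ∃ c > 0, ∀ u, c * ‖u‖ ≤ ⨆ i, ⟪ξ i, u⟫ := by
  obtain ⟨c, hc, hball⟩ :=
    Metric.nhds_basis_closedBall.mem_iff.mp (mem_interior_iff_mem_nhds.mp h0)
  refine ⟨c, hc, fun u => ?_⟩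
  rcases eq_or_ne u 0 with rfl | hu
  · simp [ciSup_const]
  have hnorm : ‖u‖ ≠ 0 := norm_ne_zero_iff.mpr hu
  have hw : (c / ‖u‖) • u ∈ Metric.closedBall (0 : E) c := by
    rw [mem_closedBall_zero_iff, norm_smul, Real.norm_of_nonneg (by positivity),
      div_mul_cancel₀ _ hnorm]
  calc c * ‖u‖ = ⟪(c / ‖u‖) • u, u⟫ := by
        rw [real_inner_smul_left, real_inner_self_eq_norm_mul_norm]; field_simp
    _ ≤ ⨆ i, ⟪ξ i, u⟫ := inner_le_ciSup_inner_of_mem_convexHull ξ (hball hw) u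

theorem lipschitzWith_ciSup_inner_sub (x₀ : E) :
    LipschitzWith (⨆ i, ‖ξ i‖₊) fun x => ⨆ i, ⟪ξ i, x - x₀⟫ := by
  refine LipschitzWith.ciSup fun i => LipschitzWith.of_dist_le_mul fun x y => ?_
  calc dist ⟪ξ i, x - x₀⟫ ⟪ξ i, y - x₀⟫ = |⟪ξ i, x - y⟫| := by
        rw [Real.dist_eq, ← inner_sub_right, sub_sub_sub_cancel_right]
    _ ≤ ‖ξ i‖ * ‖x - y‖ := abs_real_inner_le_norm _ _
    _ ≤ (⨆ j, ‖ξ j‖₊ : ℝ≥0) * dist x y := by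
        rw [dist_eq_norm]
        gcongr
        exact_mod_cast le_ciSup (Set.finite_range fun j => ‖ξ j‖₊).bddAbove i

theorem exists_hasGradientAt_of_differentiableAt [CompleteSpace E] {r : ℝ} {x₀ x : E}
    (hx : DifferentiableAt ℝ (fun y => r - ⨆ i, ⟪ξ i, y - x₀⟫) x) :
    ∃ i, HasGradientAt (fun y => r - ⨆ i, ⟪ξ i, y - x₀⟫) (-ξ i) x := by
  obtain ⟨i, hi⟩ := exists_eq_ciSup_of_finite (f := fun i => ⟪ξ i, x - x₀⟫)
  have hface := hasGradientAt_const_sub_inner_sub r (ξ i) x₀ x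
  refine ⟨i, hasGradientAt_iff_hasFDerivAt.mpr ?_⟩
  refine hx.hasFDerivAt_of_eventually_le_of_eq (hasGradientAt_iff_hasFDerivAt.mp hface)
    (Eventually.of_forall fun y => ?_) (by rw [hi])
  exact sub_le_sub_left (inner_le_ciSup_inner ξ i _) r

variable (x₀ : E) (r : ℝ)

theorem cellinaPyramid_eq_iInter : cellinaPyramid ξ x₀ r = ⋂ i, {x | ⟪ξ i, x - x₀⟫ ≤ r} := by
  ext x
  simp only [cellinaPyramid, mem_iInter, mem_ofPred_eq]
  exact ciSup_le_iff (Set.finite_range fun j => ⟪ξ j, x - x₀⟫).bddAbove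

theorem convex_cellinaPyramid : Convex ℝ (cellinaPyramid ξ x₀ r) := by
  rw [cellinaPyramid_eq_iInter]
  refine convex_iInter fun i => ?_
  simp_rw [inner_sub_right, sub_le_iff_le_add]
  exact convex_halfSpace_le ⟨inner_add_right (ξ i), fun c a => real_inner_smul_right (ξ i) a c⟩ _

theorem isClosed_cellinaPyramid : IsClosed (cellinaPyramid ξ x₀ r) :=
  isClosed_le (lipschitzWith_ciSup_inner_sub ξ x₀).continuous continuous_const

theorem isCompact_cellinaPyramid [ProperSpace E]
    (h0 : (0 : E) ∈ interior (convexHull ℝ (range ξ))) : IsCompact (cellinaPyramid ξ x₀ r) := by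
  obtain ⟨c, hc, hcoer⟩ := exists_pos_mul_norm_le_ciSup_inner ξ h0
  refine (Metric.isBounded_closedBall (x := x₀) (r := r / c)).isCompact_closure.of_isClosed_subset
    (isClosed_cellinaPyramid ξ x₀ r) (subset_closure.trans' fun x hx => ?_)
  rw [Metric.mem_closedBall, dist_eq_norm, le_div_iff₀ hc, mul_comm]
  exact (hcoer _).trans hx

variable {x₀ r}

theorem center_mem_interior_cellinaPyramid (hr : 0 < r) :
    x₀ ∈ interior (cellinaPyramid ξ x₀ r) := by
  have hopen : IsOpen {x | ⨆ i, ⟪ξ i, x - x₀⟫ < r} :=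
    isOpen_lt (lipschitzWith_ciSup_inner_sub ξ x₀).continuous continuous_const
  refine interior_maximal (fun x (hx : ⨆ i, ⟪ξ i, x - x₀⟫ < r) => hx.le) hopen ?_
  show ⨆ i, ⟪ξ i, x₀ - x₀⟫ < r
  simpa only [sub_self, inner_zero_right, ciSup_const] using hr

end MaxOfInner

theorem stmt13_general (n l : ℕ) (hl : 0 < l)
    (ξ : Fin l → EuclideanSpace ℝ (Fin n))
    (h0 : (0 : EuclideanSpace ℝ (Fin n)) ∈ interior (convexHull ℝ (Set.range ξ)))
    (x₀ : EuclideanSpace ℝ (Fin n)) (r : ℝ) (hr : 0 < r)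
    (p : EuclideanSpace ℝ (Fin n) → ℝ)
    (hp : ∀ x, p x = r - ⨆ i, ⟪ξ i, x - x₀⟫)
    (P : Set (EuclideanSpace ℝ (Fin n))) (hP : P = {x | 0 ≤ p x}) :
    IsCompact P ∧ Convex ℝ P ∧ x₀ ∈ interior P ∧
    LipschitzWith (⨆ i, ‖ξ i‖₊) p ∧
    (∀ x ∈ interior P, 0 < p x) ∧
    (∀ x ∈ frontier P, p x = 0) ∧
    (∀ᵐ x ∂(volume.restrict (interior P)), ∃ i, HasGradientAt p (-(ξ i)) x) := by
  have : Nonempty (Fin l) := ⟨⟨0, hl⟩⟩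
  have hlip : LipschitzWith (⨆ i, ‖ξ i‖₊) p := LipschitzWith.of_dist_le_mul fun x y => by
    rw [hp, hp, dist_sub_left]
    exact (lipschitzWith_ciSup_inner_sub ξ x₀).dist_le_mul x y
  have hpyr : P = cellinaPyramid ξ x₀ r := by
    ext x
    simp only [hP, hp, cellinaPyramid, mem_ofPred_eq, sub_nonneg]
  refine ⟨hpyr ▸ isCompact_cellinaPyramid ξ x₀ r h0, hpyr ▸ convex_cellinaPyramid ξ x₀ r,
    hpyr ▸ center_mem_interior_cellinaPyramid ξ hr, hlip, fun x hx => ?_, fun x hx => ?_, ?_⟩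
  · rw [hp, sub_pos]
    exact ciSup_inner_sub_lt_of_mem_interior ξ hr (hpyr ▸ hx)
  · rw [hP] at hx
    exact (frontier_le_subset_eq continuous_const hlip.continuous hx).symm
  · filter_upwards [ae_restrict_of_ae hlip.ae_differentiableAt] with x hx
    rw [funext hp] at hx ⊢
    exact exists_hasGradientAt_of_differentiableAt ξ hx

/-- Cellina pyramid: let `ξ₁, …, ξ_l ∈ ℝⁿ` be pairwise distinct with `0` in the
interior of their convex hull, `x₀ ∈ ℝⁿ`, `r > 0`, and set `p(x) = r − max_i ⟨ξ_i, x − x₀⟩`,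
`P = {x : p(x) ≥ 0}`. Then `P` is compact and convex with `x₀ ∈ interior P`; `p` is Lipschitz
with constant `max_i |ξ_i|`; `p > 0` on `interior P` and `p = 0` on `∂P`; and at Lebesgue-a.e.
`x ∈ interior P`, `p` is differentiable with gradient `∇p(x) ∈ {−ξ₁, …, −ξ_l}`. -/
theorem stmt13 (n l : ℕ) (hl : 0 < l)
    (ξ : Fin l → EuclideanSpace ℝ (Fin n)) (hξ : Function.Injective ξ)
    (h0 : (0 : EuclideanSpace ℝ (Fin n)) ∈ interior (convexHull ℝ (Set.range ξ)))
    (x₀ : EuclideanSpace ℝ (Fin n)) (r : ℝ) (hr : 0 < r)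
    (p : EuclideanSpace ℝ (Fin n) → ℝ)
    (hp : ∀ x, p x = r - ⨆ i, ⟪ξ i, x - x₀⟫)
    (P : Set (EuclideanSpace ℝ (Fin n))) (hP : P = {x | 0 ≤ p x}) :
    IsCompact P ∧ Convex ℝ P ∧ x₀ ∈ interior P ∧
    LipschitzWith (⨆ i, ‖ξ i‖₊) p ∧
    (∀ x ∈ interior P, 0 < p x) ∧
    (∀ x ∈ frontier P, p x = 0) ∧
    (∀ᵐ x ∂(volume.restrict (interior P)), ∃ i, HasGradientAt p (-(ξ i)) x) :=
  stmt13_general n l hl ξ h0 x₀ r hr p hp P hP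
end

section
/- Let T_h be a triangular domain, let x₁⁰ ∈ (a,b) be the unique point with h(x₁⁰) = x₁⁰ + h(b) − a, and let l₀ = x₁⁰ − a be the side length of the inscribed square q(T_h) = (a, x₁⁰) × (h(b), h(b) + x₁⁰ − a). Set c₁ = −min_{[a,b]} h' and c₂ = −max_{[a,b]} h' (so 0 < c₂ ≤ c₁). Then l₀ ≤ (h(a) − h(b))/(1 + c₂) and l₀ ≤ (b − a)/(1 + 1/c₁). -/
/-! The square `q(T_h)` touches the graph of `h` at `x₁⁰`, so its side `l₀` equals the drop
`h(x₁⁰) − h(b)`. By the mean value theorem `h` falls by at least `c₂ l₀` on `[a, x₁⁰]` and by at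
most `c₁ (b − x₁⁰)` on `[x₁⁰, b]`; rearranging these two estimates gives the two bounds. -/

open Set

noncomputable section

section MeanValue

variable {f f' : ℝ → ℝ} {a b C x y : ℝ}

theorem sub_le_mul_sub_of_hasDerivWithinAt_Icc_le
    (hf : ∀ t ∈ Icc a b, HasDerivWithinAt f (f' t) (Icc a b) t)
    (hle : ∀ t ∈ Ioo a b, f' t ≤ C) (hx : x ∈ Icc a b) (hy : y ∈ Icc a b) (hxy : x ≤ y) :
    f y - f x ≤ C * (y - x) := by
  have hderivAt (t) (ht : t ∈ Ioo a b) : HasDerivAt f (f' t) t :=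
    (hf t (Ioo_subset_Icc_self ht)).hasDerivAt (Icc_mem_nhds ht.1 ht.2)
  refine (convex_Icc a b).image_sub_le_mul_sub_of_deriv_le
    (fun t ht ↦ (hf t ht).continuousWithinAt) (fun t ht ↦ ?_) (fun t ht ↦ ?_) x hx y hy hxy
  · rw [interior_Icc] at ht
    exact (hderivAt t ht).differentiableAt.differentiableWithinAt
  · rw [interior_Icc] at ht
    exact (hderivAt t ht).deriv ▸ hle t ht

theorem mul_sub_le_sub_of_le_hasDerivWithinAt_Icc
    (hf : ∀ t ∈ Icc a b, HasDerivWithinAt f (f' t) (Icc a b) t)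
    (hge : ∀ t ∈ Ioo a b, C ≤ f' t) (hx : x ∈ Icc a b) (hy : y ∈ Icc a b) (hxy : x ≤ y) :
    C * (y - x) ≤ f y - f x := by
  have := sub_le_mul_sub_of_hasDerivWithinAt_Icc_le (f := -f) (f' := -f') (C := -C)
    (fun t ht ↦ (hf t ht).neg) (fun t ht ↦ neg_le_neg (hge t ht)) hx hy hxy
  simp only [Pi.neg_apply] at this
  linarith

end MeanValue

theorem le_div_one_add_inv_of_le_mul_sub {l c B : ℝ} (hc : 0 < c) (hl : l ≤ c * (B - l)) :
    l ≤ B / (1 + 1 / c) := by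
  rw [le_div_iff₀ (by positivity), mul_one_add, ← div_eq_mul_one_div, ← le_sub_iff_add_le',
    div_le_iff₀ hc, mul_comm]
  exact hl

/-- in a triangular domain `T_h`, with `x₁⁰ ∈ (a,b)` the unique point where
`h(x₁⁰) = x₁⁰ + h(b) − a` and `l₀ = x₁⁰ − a` the side of the inscribed square `q(T_h)`, and
with `c₁ = −min_{[a,b]} h'`, `c₂ = −max_{[a,b]} h'` (so `0 < c₂ ≤ c₁`), one has
`l₀ ≤ (h(a) − h(b))/(1 + c₂)` and `l₀ ≤ (b − a)/(1 + 1/c₁)`. -/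
theorem stmt15 (a b : ℝ) (hab : a < b) (h h' : ℝ → ℝ)
    (hderiv : ∀ t ∈ Set.Icc a b, HasDerivWithinAt h (h' t) (Set.Icc a b) t)
    (hcont : ContinuousOn h' (Set.Icc a b))
    (hneg : ∀ t ∈ Set.Icc a b, h' t < 0)
    (x0 : ℝ) (hx0 : x0 ∈ Set.Ioo a b) (heq : h x0 = x0 + h b - a)
    (c1 c2 : ℝ)
    (hc1 : c1 = -sInf (h' '' Set.Icc a b)) (hc2 : c2 = -sSup (h' '' Set.Icc a b)) :
    0 < c2 ∧ c2 ≤ c1 ∧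
    x0 - a ≤ (h a - h b) / (1 + c2) ∧
    x0 - a ≤ (b - a) / (1 + 1 / c1) := by
  have hne : (Icc a b).Nonempty := nonempty_Icc.2 hab.le
  have himage_compact := isCompact_Icc.image_of_continuousOn hcont
  have hmax_neg : sSup (h' '' Icc a b) < 0 :=
    (isCompact_Icc.sSup_lt_iff_of_continuous hne hcont 0).2 hneg
  have hc12 : c2 ≤ c1 := by
    rw [hc1, hc2, neg_le_neg_iff]
    exact csInf_le_csSup (hne.image h') himage_compact.bddBelow himage_compact.bddAbove
  have hx0_mem := Ioo_subset_Icc_self hx0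
  have hdrop_left : h x0 - h a ≤ -c2 * (x0 - a) :=
    sub_le_mul_sub_of_hasDerivWithinAt_Icc_le hderiv
      (fun t ht ↦ by
        rw [hc2, neg_neg]
        exact le_csSup himage_compact.bddAbove (mem_image_of_mem h' (Ioo_subset_Icc_self ht)))
      (left_mem_Icc.2 hab.le) hx0_mem hx0.1.le
  have hdrop_right : -c1 * (b - x0) ≤ h b - h x0 :=
    mul_sub_le_sub_of_le_hasDerivWithinAt_Icc hderiv
      (fun t ht ↦ by
        rw [hc1, neg_neg]
        exact csInf_le himage_compact.bddBelow (mem_image_of_mem h' (Ioo_subset_Icc_self ht)))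
      hx0_mem (right_mem_Icc.2 hab.le) hx0.2.le
  refine ⟨by linarith, hc12, ?_, ?_⟩
  · rw [le_div_iff₀ (by linarith)]
    linarith
  · exact le_div_one_add_inv_of_le_mul_sub (by linarith) (by linarith)

end
end

section
/- Let T_h be a triangular domain, let x₁⁰ ∈ (a,b) be the unique point with h(x₁⁰) = x₁⁰ + h(b) − a, and let l₀ = x₁⁰ − a be the side length of the square q(T_h). Define the two triangular sub-domains u(T_h) = {(s,t) : a ≤ s ≤ x₁⁰, h(x₁⁰) ≤ t ≤ h(s)} (the triangular domain of h restricted to [a, x₁⁰]) and r(T_h) = {(s,t) : x₁⁰ ≤ s ≤ b, h(b) ≤ t ≤ h(s)} (the triangular domain of h restricted to [x₁⁰, b]). Set c₁ = −min_{[a,b]} h', c₂ = −max_{[a,b]} h', r_B = 1/(1 + 1/c₁) and r_H = 1/(1 + c₂). Then the side lengths of the inscribed squares q(u(T_h)) and q(r(T_h)) are both at most max{r_B, r_H} · l₀. Consequently, in the recursive square covering of T_h, at the m-th step each of the 2^m squares has side length at most max{h(a) − h(b), b − a} · (max{r_B, r_H})^{m+1}. -/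
/-!
Write `x = x₁⁰`, so that `x − a = h(x) − h(b)`. Since `−h' ≤ c₁` on `[x, b]`, this gives
`x − a ≤ c₁ (b − x)`, i.e. `x − a ≤ r_B (b − a)`; since `−h' ≥ c₂` on `[a, x]`,
`h(a) − h(b) ≥ (1 + c₂)(x − a)`, i.e. `x − a ≤ r_H (h(a) − h(b))`. The first bound applied to
`u(T_h)` (width `x − a`) and the second to `r(T_h)` (height `h(x) − h(b) = x − a`) shrink the
side of the inscribed square by `max{r_B, r_H}` at every step, and the first square has side at
most `r_B (b − a)`.
-/

open Set

noncomputable section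

/-- The abscissa `x₁⁰` splitting the triangular domain of `h` over `[a,b]`: the (unique, under
the standing hypotheses) solution in `(a,b)` of `h(x) = x + h(b) − a`. The inscribed square
`q` of this triangular domain is `(a, x₁⁰) × (h(b), h(b) + x₁⁰ − a)`, of side `x₁⁰ − a`. -/
def splitPt (h : ℝ → ℝ) (a b : ℝ) : ℝ :=
  sInf {x | x ∈ Set.Ioo a b ∧ h x = x + h b - a}

/-- Iteration of the operators `u` (encoded by `true`) and `r` (encoded by `false`) on the
interval of definition of a triangular domain of `h`: `u` replaces `[a,b]` by `[a, x₁⁰]` and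
`r` replaces it by `[x₁⁰, b]`. For a word `σ = (α₁, …, α_m)`, `iterUR h σ (a,b)` is the
interval of the triangular domain `α₁(α₂(⋯ α_m(T_h)))` (the innermost letter acting first). -/
def iterUR (h : ℝ → ℝ) : List Bool → ℝ × ℝ → ℝ × ℝ
  | [], I => I
  | (c :: σ), I =>
      let J := iterUR h σ I
      if c then (J.1, splitPt h J.1 J.2) else (splitPt h J.1 J.2, J.2)

structure SlopeBoundsOn (h : ℝ → ℝ) (c₂ c₁ : ℝ) (s : Set ℝ) : Prop where
  continuousOn : ContinuousOn h s
  mul_sub_le : ∀ x ∈ s, ∀ y ∈ s, x ≤ y → c₂ * (y - x) ≤ h x - h y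
  sub_le_mul : ∀ x ∈ s, ∀ y ∈ s, x ≤ y → h x - h y ≤ c₁ * (y - x)

namespace SlopeBoundsOn

variable {h : ℝ → ℝ} {c₁ c₂ : ℝ} {s t : Set ℝ}

theorem mono (hS : SlopeBoundsOn h c₂ c₁ s) (hts : t ⊆ s) : SlopeBoundsOn h c₂ c₁ t :=
  ⟨hS.continuousOn.mono hts, fun x hx y hy => hS.mul_sub_le x (hts hx) y (hts hy),
    fun x hx y hy => hS.sub_le_mul x (hts hx) y (hts hy)⟩

theorem strictAntiOn (hS : SlopeBoundsOn h c₂ c₁ s) (hc₂ : 0 < c₂) : StrictAntiOn h s :=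
  fun x hx y hy hxy => by nlinarith [hS.mul_sub_le x hx y hy hxy.le]

end SlopeBoundsOn

theorem slopeBoundsOn_of_hasDerivWithinAt {h h' : ℝ → ℝ} {a b c₁ c₂ : ℝ}
    (hderiv : ∀ t ∈ Icc a b, HasDerivWithinAt h (h' t) (Icc a b) t)
    (hc₁ : ∀ t ∈ Icc a b, -c₁ ≤ h' t) (hc₂ : ∀ t ∈ Icc a b, h' t ≤ -c₂) :
    SlopeBoundsOn h c₂ c₁ (Icc a b) := by
  have hcont : ContinuousOn h (Icc a b) := fun t ht => (hderiv t ht).continuousWithinAt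
  have hderivAt : ∀ t ∈ interior (Icc a b), HasDerivAt h (h' t) t := fun t ht =>
    (hderiv t (interior_subset ht)).hasDerivAt (mem_interior_iff_mem_nhds.1 ht)
  have hdiff : DifferentiableOn ℝ h (interior (Icc a b)) := fun t ht =>
    (hderivAt t ht).differentiableAt.differentiableWithinAt
  refine ⟨hcont, fun x hx y hy hxy => ?_, fun x hx y hy hxy => ?_⟩
  · have := (convex_Icc a b).image_sub_le_mul_sub_of_deriv_le hcont hdiff
      (fun t ht => (hderivAt t ht).deriv ▸ hc₂ t (interior_subset ht)) x hx y hy hxy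
    linarith
  · have := (convex_Icc a b).mul_sub_le_image_sub_of_le_deriv hcont hdiff
      (fun t ht => (hderivAt t ht).deriv ▸ hc₁ t (interior_subset ht)) x hx y hy hxy
    linarith

section SplitPoint

variable {h : ℝ → ℝ} {a b c₁ c₂ : ℝ}

theorem splitPt_spec (hab : a < b) (hcont : ContinuousOn h (Icc a b))
    (hanti : StrictAntiOn h (Icc a b)) :
    splitPt h a b ∈ Ioo a b ∧ h (splitPt h a b) = splitPt h a b + h b - a := by
  set g : ℝ → ℝ := fun x => h x - x - (h b - a)
  have hg : StrictAntiOn g (Icc a b) := fun x hx y hy hxy => by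
    have := hanti hx hy hxy
    simp only [g]
    linarith
  have hga : 0 < g a := by
    have := hanti (left_mem_Icc.2 hab.le) (right_mem_Icc.2 hab.le) hab
    simp only [g]
    linarith
  -- `g` is injective, so the set whose `sInf` defines `splitPt` is the singleton of this zero
  obtain ⟨x₀, hx₀, hgx₀⟩ : (0 : ℝ) ∈ g '' Ioo a b :=
    intermediate_value_Ioo' hab.le (by fun_prop) ⟨by simp only [g]; linarith, hga⟩
  have hset : {x | x ∈ Ioo a b ∧ h x = x + h b - a} = {x₀} := by
    ext y
    constructor
    · rintro ⟨hy, hyeq⟩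
      exact hg.injOn (Ioo_subset_Icc_self hy) (Ioo_subset_Icc_self hx₀)
        (by simp only [g] at hgx₀ ⊢; linarith)
    · rintro rfl
      exact ⟨hx₀, by simp only [g] at hgx₀; linarith⟩
  rw [splitPt, hset, csInf_singleton]
  exact ⟨hx₀, by simp only [g] at hgx₀; linarith⟩

theorem splitPt_sub_le_mul_width (hab : a < b) (hS : SlopeBoundsOn h c₂ c₁ (Icc a b))
    (hc₁ : 0 < c₁) (hc₂ : 0 < c₂) : splitPt h a b - a ≤ 1 / (1 + 1 / c₁) * (b - a) := by
  obtain ⟨⟨hax, hxb⟩, hx⟩ := splitPt_spec hab hS.continuousOn (hS.strictAntiOn hc₂)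
  have := hS.sub_le_mul _ ⟨hax.le, hxb.le⟩ b (right_mem_Icc.2 hab.le) hxb.le
  rw [div_mul_eq_mul_div, one_mul, le_div_iff₀ (by positivity)]
  field_simp
  nlinarith

theorem splitPt_sub_le_mul_height (hab : a < b) (hS : SlopeBoundsOn h c₂ c₁ (Icc a b))
    (hc₂ : 0 < c₂) : splitPt h a b - a ≤ 1 / (1 + c₂) * (h a - h b) := by
  obtain ⟨⟨hax, hxb⟩, hx⟩ := splitPt_spec hab hS.continuousOn (hS.strictAntiOn hc₂)
  have := hS.mul_sub_le a (left_mem_Icc.2 hab.le) _ ⟨hax.le, hxb.le⟩ hax.le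
  rw [div_mul_eq_mul_div, one_mul, le_div_iff₀ (by positivity)]
  nlinarith

theorem splitPt_children_sub_le (hab : a < b) (hS : SlopeBoundsOn h c₂ c₁ (Icc a b))
    (hc₁ : 0 < c₁) (hc₂ : 0 < c₂) :
    splitPt h a (splitPt h a b) - a ≤
        max (1 / (1 + 1 / c₁)) (1 / (1 + c₂)) * (splitPt h a b - a) ∧
      splitPt h (splitPt h a b) b - splitPt h a b ≤
        max (1 / (1 + 1 / c₁)) (1 / (1 + c₂)) * (splitPt h a b - a) := by
  obtain ⟨⟨hax, hxb⟩, hx⟩ := splitPt_spec hab hS.continuousOn (hS.strictAntiOn hc₂)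
  constructor
  · calc _ ≤ 1 / (1 + 1 / c₁) * (splitPt h a b - a) :=
          splitPt_sub_le_mul_width hax (hS.mono (Icc_subset_Icc le_rfl hxb.le)) hc₁ hc₂
      _ ≤ _ := mul_le_mul_of_nonneg_right (le_max_left _ _) (by linarith)
  · calc _ ≤ 1 / (1 + c₂) * (h (splitPt h a b) - h b) :=
          splitPt_sub_le_mul_height hxb (hS.mono (Icc_subset_Icc hax.le le_rfl)) hc₂
      _ = 1 / (1 + c₂) * (splitPt h a b - a) := by rw [hx]; ring
      _ ≤ _ := mul_le_mul_of_nonneg_right (le_max_right _ _) (by linarith)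

end SplitPoint

section RecursiveCovering

variable {h : ℝ → ℝ} {a b c₁ c₂ : ℝ}

/-- The side `x₁⁰ − a` of the inscribed square `q` of the triangular domain over `I = [a, b]`. -/
def squareSide (h : ℝ → ℝ) (I : ℝ × ℝ) : ℝ := splitPt h I.1 I.2 - I.1

theorem iterUR_subinterval (hab : a < b) (hcont : ContinuousOn h (Icc a b))
    (hanti : StrictAntiOn h (Icc a b)) (σ : List Bool) :
    a ≤ (iterUR h σ (a, b)).1 ∧ (iterUR h σ (a, b)).1 < (iterUR h σ (a, b)).2 ∧
      (iterUR h σ (a, b)).2 ≤ b := by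
  induction σ with
  | nil => exact ⟨le_rfl, hab, le_rfl⟩
  | cons c σ ih =>
    obtain ⟨haJ, hJ, hJb⟩ := ih
    have hsub := Icc_subset_Icc haJ hJb
    obtain ⟨⟨hJx, hxJ⟩, -⟩ := splitPt_spec hJ (hcont.mono hsub) (hanti.mono hsub)
    cases c
    · exact ⟨haJ.trans hJx.le, hxJ, hJb⟩
    · exact ⟨haJ, hJx, hxJ.le.trans hJb⟩

theorem squareSide_iterUR_le (hab : a < b) (hS : SlopeBoundsOn h c₂ c₁ (Icc a b))
    (hc₁ : 0 < c₁) (hc₂ : 0 < c₂) (σ : List Bool) :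
    squareSide h (iterUR h σ (a, b)) ≤
      max (1 / (1 + 1 / c₁)) (1 / (1 + c₂)) ^ σ.length * squareSide h (a, b) := by
  set K := max (1 / (1 + 1 / c₁)) (1 / (1 + c₂))
  have hK : 0 ≤ K := le_max_of_le_right (by positivity)
  induction σ with
  | nil => simp [iterUR]
  | cons c σ ih =>
    obtain ⟨haJ, hJ, hJb⟩ := iterUR_subinterval hab hS.continuousOn (hS.strictAntiOn hc₂) σ
    have hchild := splitPt_children_sub_le hJ (hS.mono (Icc_subset_Icc haJ hJb)) hc₁ hc₂
    calc squareSide h (iterUR h (c :: σ) (a, b)) ≤ K * squareSide h (iterUR h σ (a, b)) := by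
          cases c
          · exact hchild.2
          · exact hchild.1
      _ ≤ K * (K ^ σ.length * squareSide h (a, b)) := mul_le_mul_of_nonneg_left ih hK
      _ = K ^ (c :: σ).length * squareSide h (a, b) := by rw [List.length_cons]; ring

end RecursiveCovering

/-- with `c₁ = −min h'`, `c₂ = −max h'`, `r_B = 1/(1 + 1/c₁)`,
`r_H = 1/(1 + c₂)`, the inscribed squares of `u(T_h)` and `r(T_h)` have side at most
`max{r_B, r_H}·l₀`, where `l₀ = x₁⁰ − a` is the side of `q(T_h)`; consequently, in the
recursive square covering of `T_h`, each of the `2^m` squares of the `m`-th step has side at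
most `max{h(a) − h(b), b − a}·(max{r_B, r_H})^{m+1}`. -/
theorem stmt16 (a b : ℝ) (hab : a < b) (h h' : ℝ → ℝ)
    (hderiv : ∀ t ∈ Set.Icc a b, HasDerivWithinAt h (h' t) (Set.Icc a b) t)
    (hcont : ContinuousOn h' (Set.Icc a b))
    (hneg : ∀ t ∈ Set.Icc a b, h' t < 0)
    (c1 c2 rB rH : ℝ)
    (hc1 : c1 = -sInf (h' '' Set.Icc a b)) (hc2 : c2 = -sSup (h' '' Set.Icc a b))
    (hrB : rB = 1 / (1 + 1 / c1)) (hrH : rH = 1 / (1 + c2)) :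
    (splitPt h a (splitPt h a b) - a ≤ max rB rH * (splitPt h a b - a)) ∧
    (splitPt h (splitPt h a b) b - splitPt h a b ≤ max rB rH * (splitPt h a b - a)) ∧
    (∀ σ : List Bool,
      splitPt h (iterUR h σ (a, b)).1 (iterUR h σ (a, b)).2 - (iterUR h σ (a, b)).1 ≤
        max (h a - h b) (b - a) * (max rB rH) ^ (σ.length + 1)) := by
  have hcompact : IsCompact (h' '' Icc a b) := isCompact_Icc.image_of_continuousOn hcont
  have hne : (h' '' Icc a b).Nonempty := (nonempty_Icc.2 hab.le).image h'
  have hc1_le : ∀ t ∈ Icc a b, -c1 ≤ h' t := fun t ht => by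
    rw [hc1, neg_neg]
    exact csInf_le hcompact.bddBelow (mem_image_of_mem h' ht)
  have hle_c2 : ∀ t ∈ Icc a b, h' t ≤ -c2 := fun t ht => by
    rw [hc2, neg_neg]
    exact le_csSup hcompact.bddAbove (mem_image_of_mem h' ht)
  have hc2_pos : 0 < c2 := by
    obtain ⟨t, ht, hts⟩ := hcompact.sSup_mem hne
    linarith [hneg t ht]
  have ha : a ∈ Icc a b := left_mem_Icc.2 hab.le
  have hc1_pos : 0 < c1 := by linarith [hc1_le a ha, hle_c2 a ha]
  have hS := slopeBoundsOn_of_hasDerivWithinAt hderiv hc1_le hle_c2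
  subst hrB hrH
  obtain ⟨hu, hr⟩ := splitPt_children_sub_le hab hS hc1_pos hc2_pos
  refine ⟨hu, hr, fun σ => ?_⟩
  set K := max (1 / (1 + 1 / c1)) (1 / (1 + c2))
  have hK : 0 ≤ K := le_max_of_le_right (by positivity)
  have hroot : squareSide h (a, b) ≤ K * max (h a - h b) (b - a) :=
    (splitPt_sub_le_mul_width hab hS hc1_pos hc2_pos).trans
      (mul_le_mul (le_max_left _ _) (le_max_right _ _) (by linarith) hK)
  calc squareSide h (iterUR h σ (a, b)) ≤ K ^ σ.length * squareSide h (a, b) :=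
        squareSide_iterUR_le hab hS hc1_pos hc2_pos σ
    _ ≤ K ^ σ.length * (K * max (h a - h b) (b - a)) := by gcongr
    _ = max (h a - h b) (b - a) * K ^ (σ.length + 1) := by ring

end
end
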